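/- For all positive integers n and k with 1 ≤ k ≤ 2^n, v_2(S(2^n, k)) = s_2(k) − 1, where S denotes the Stirling number of the second kind and s_2(k) is the binary digit sum of k. -/

import Mathlib

/-- Stirling numbers of the second kind, via the recurrence
`S(n+1,k+1) = S(n,k) + (k+1) * S(n,k+1)`. -/
def stirling2 : ℕ → ℕ → ℕ
  | 0, 0 => 1
  | 0, _ + 1 => 0
  | _ + 1, 0 => 0
  | n + 1, k + 1 => stirling2 n k + (k + 1) * stirling2 n (k + 1)

/-- Binary digit sum of `k`. -/
def s2 (k : ℕ) : ℕ := (Nat.digits 2 k).sum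

/-- Number of trailing 1-bits of `k`: the least `i` with the `i`-th binary digit of `k` zero. -/
def uBits (k : ℕ) : ℕ :=
  Nat.find (p := fun i => k.testBit i = false)
    ⟨k, Nat.testBit_lt_two_pow (Nat.lt_two_pow_self (n := k))⟩


/-!
Write `k! S(m,k) = Σ_i (-1)^(k-i) C(k,i) i^m` and split the sum by the parity of `i`. For
`k ≤ m` the even part is divisible by `2^k`. Expanding `(2j+1)^m` binomially and then `j^m'` in
the basis `C(j,t)`, the odd part becomes `Σ 2^m' C(m,m') S(m',t) t! L(k,t)` with
`L(k,t) = Σ_j C(k,2j+1) C(j,t) = 2^(k-2t-1) C(k-t-1,t)`, whose `m' = 0` term is `2^(k-1)`.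
Legendre's and Kummer's formulas bound the valuations of all other terms, and induction on
`(m,k)` gives `2^s₂(k) ∣ 2^s₂(m) S(m,k)`. For `m = 2^n` these bounds are one better, so
`v₂(k! S(2^n,k)) = k - 1` exactly, and Legendre's formula `v₂(k!) = k - s₂(k)` finishes.
-/

open Finset Nat
open scoped fwdDiff

theorem stirling2_eq_stirlingSecond : stirling2 = stirlingSecond := by
  funext n k
  induction n generalizing k with
  | zero => cases k <;> rfl
  | succ n ih =>
    cases k with
    | zero => rfl
    | succ k => rw [stirling2, stirlingSecond_succ_succ, ih, ih, add_comm]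

theorem stirling2_eq_zero_of_lt {n k : ℕ} (h : n < k) : stirling2 n k = 0 := by
  rw [stirling2_eq_stirlingSecond]
  exact stirlingSecond_eq_zero_of_lt h

theorem self_mul_choose_eq (j t : ℕ) :
    j * j.choose t = (t + 1) * j.choose (t + 1) + t * j.choose t := by
  rcases le_or_gt t j with h | h
  · have := choose_succ_right_eq j t
    calc j * j.choose t = (j - t + t) * j.choose t := by rw [Nat.sub_add_cancel h]
      _ = _ := by rw [add_mul, mul_comm, ← this, mul_comm]
  · simp [choose_eq_zero_of_lt h, choose_eq_zero_of_lt (h.trans (lt_succ_self t))]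

theorem pow_eq_sum_stirling2_mul_choose (m j : ℕ) :
    j ^ m = ∑ t ∈ range (m + 1), stirling2 m t * t ! * j.choose t := by
  induction m with
  | zero => simp [stirling2]
  | succ m ih =>
    have hS : stirling2 m (m + 1) = 0 := stirling2_eq_zero_of_lt (lt_succ_self m)
    calc j ^ (m + 1)
        = ∑ t ∈ range (m + 1), (stirling2 m t * (t + 1)! * j.choose (t + 1)
            + t * (stirling2 m t * t ! * j.choose t)) := by
          rw [pow_succ, ih, sum_mul]
          refine sum_congr rfl fun t _ => ?_
          rw [mul_assoc, mul_comm _ j, self_mul_choose_eq, factorial_succ]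
          ring
      _ = ∑ t ∈ range (m + 1), stirling2 m t * (t + 1)! * j.choose (t + 1)
            + ∑ t ∈ range (m + 1),
                (t + 1) * (stirling2 m (t + 1) * (t + 1)! * j.choose (t + 1)) := by
          rw [sum_add_distrib, sum_range_succ' (fun t => t * _),
            sum_range_succ (fun t => (t + 1) * _), hS]
          simp
      _ = ∑ t ∈ range (m + 2), stirling2 (m + 1) t * t ! * j.choose t := by
          rw [sum_range_succ' _ (m + 1), ← sum_add_distrib]
          simp only [stirling2, zero_mul, add_zero]
          refine sum_congr rfl fun t _ => ?_
          ring

theorem fwdDiff_iter_pow_eq_factorial_mul_stirling2 (m k : ℕ) :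
    (Δ_[1])^[k] (fun x : ℕ ↦ (x : ℤ) ^ m) 0 = k ! * stirling2 m k := by
  have hpow : (fun x : ℕ ↦ (x : ℤ) ^ m) =
      ∑ t ∈ range (m + 1),
        ((stirling2 m t * t ! : ℕ) : ℤ) • fun x : ℕ ↦ (x.choose t : ℤ) := by
    ext x
    simp only [Finset.sum_apply, Pi.smul_apply, smul_eq_mul]
    exact_mod_cast pow_eq_sum_stirling2_mul_choose m x
  simp only [hpow, fwdDiff_iter_finsetSum, fwdDiff_iter_const_smul, Finset.sum_apply,
    Pi.smul_apply, fwdDiff_iter_choose_zero, smul_eq_mul, mul_ite, mul_one, mul_zero,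
    sum_ite_eq, mem_range]
  split_ifs with hk
  · push_cast; ring
  · rw [stirling2_eq_zero_of_lt (by omega)]; simp

theorem sum_range_two_mul {M : Type*} [AddCommMonoid M] (f : ℕ → M) (n : ℕ) :
    ∑ i ∈ range (2 * n), f i = ∑ j ∈ range n, (f (2 * j) + f (2 * j + 1)) := by
  induction n with
  | zero => simp
  | succ n ih =>
    rw [show 2 * (n + 1) = 2 * n + 1 + 1 by ring, sum_range_succ, sum_range_succ, ih,
      sum_range_succ, add_assoc]

theorem sum_neg_one_pow_mul_choose_mul_pow (m k : ℕ) :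
    ∑ i ∈ range (k + 1), (-1 : ℤ) ^ i * k.choose i * (i : ℤ) ^ m =
      (-1) ^ k * k ! * stirling2 m k := by
  rw [mul_assoc, ← fwdDiff_iter_pow_eq_factorial_mul_stirling2, fwdDiff_iter_eq_sum_shift,
    mul_sum]
  refine sum_congr rfl fun i hi => ?_
  have hsign : (-1 : ℤ) ^ k * (-1) ^ (k - i) = (-1) ^ i := by
    rw [← pow_add, show k + (k - i) = i + 2 * (k - i) by have := mem_range.1 hi; omega, pow_add,
      pow_mul]
    simp
  simp only [smul_eq_mul, mul_one, zero_add, ← hsign]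
  ring

def evenChoosePowSum (k m : ℕ) : ℕ := ∑ j ∈ range (k + 1), k.choose (2 * j) * (2 * j) ^ m

def oddChoosePowSum (k m : ℕ) : ℕ :=
  ∑ j ∈ range (k + 1), k.choose (2 * j + 1) * (2 * j + 1) ^ m

theorem evenChoosePowSum_sub_oddChoosePowSum (k m : ℕ) :
    (evenChoosePowSum k m : ℤ) - oddChoosePowSum k m = (-1) ^ k * k ! * stirling2 m k := by
  rw [← sum_neg_one_pow_mul_choose_mul_pow,
    sum_subset (range_subset_range.2 (by omega : k + 1 ≤ 2 * (k + 1)))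
      fun i _ hi => by simp [choose_eq_zero_of_lt (by simpa using hi : k < i)],
    sum_range_two_mul, evenChoosePowSum, oddChoosePowSum]
  push_cast
  rw [← sum_sub_distrib]
  refine sum_congr rfl fun j _ => ?_
  rw [pow_succ, pow_mul]
  ring

theorem two_pow_dvd_evenChoosePowSum {k m : ℕ} (hm : m ≠ 0) (hkm : k ≤ m) :
    2 ^ k ∣ evenChoosePowSum k m := by
  refine dvd_sum fun j _ => (Dvd.dvd.mul_left ?_ _)
  rcases j with _ | j
  · simp [hm]
  · exact (pow_dvd_pow 2 hkm).trans (pow_dvd_pow_of_dvd (dvd_mul_right 2 _) m)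

def oddChooseSum (k t : ℕ) : ℕ := ∑ j ∈ range (k + 1), k.choose (2 * j + 1) * j.choose t

def evenChooseSum (k t : ℕ) : ℕ := ∑ j ∈ range (k + 1), k.choose (2 * j) * j.choose t

theorem oddChooseSum_succ (k t : ℕ) :
    oddChooseSum (k + 1) t = oddChooseSum k t + evenChooseSum k t := by
  rw [oddChooseSum, sum_range_succ, choose_eq_zero_of_lt (by omega), zero_mul, add_zero,
    oddChooseSum, evenChooseSum, ← sum_add_distrib]
  exact sum_congr rfl fun j _ => by rw [choose_succ_succ', add_mul, add_comm]

theorem evenChooseSum_succ_succ (k t : ℕ) :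
    evenChooseSum (k + 1) (t + 1) = evenChooseSum k (t + 1) + oddChooseSum k (t + 1)
      + oddChooseSum k t := by
  have hshift : evenChooseSum k (t + 1) =
      ∑ j ∈ range (k + 1), k.choose (2 * (j + 1)) * (j + 1).choose (t + 1) := by
    rw [evenChooseSum, sum_range_succ', sum_range_succ (fun j => k.choose (2 * (j + 1)) * _),
      choose_eq_zero_of_lt (show k < 2 * (k + 1) by omega)]
    simp
  rw [evenChooseSum, sum_range_succ', hshift, oddChooseSum, oddChooseSum, ← sum_add_distrib,
    ← sum_add_distrib]
  simp only [mul_zero, choose_zero_succ, add_zero]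
  refine sum_congr rfl fun j _ => ?_
  rw [show 2 * (j + 1) = 2 * j + 1 + 1 by ring, choose_succ_succ' k, choose_succ_succ' j]
  ring

theorem oddChooseSum_add_two_succ (k t : ℕ) :
    oddChooseSum (k + 2) (t + 1) = 2 * oddChooseSum (k + 1) (t + 1) + oddChooseSum k t := by
  rw [oddChooseSum_succ (k + 1), evenChooseSum_succ_succ, oddChooseSum_succ k]
  ring

theorem oddChooseSum_eq_zero {k t : ℕ} (h : k ≤ 2 * t) : oddChooseSum k t = 0 :=
  sum_eq_zero fun j _ => by
    rcases lt_or_ge j t with hj | hj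
    · rw [choose_eq_zero_of_lt hj, mul_zero]
    · rw [choose_eq_zero_of_lt (by omega), zero_mul]

theorem oddChooseSum_succ_zero (k : ℕ) : oddChooseSum (k + 1) 0 = 2 ^ k := by
  rw [oddChooseSum_succ, add_comm, oddChooseSum, evenChooseSum, ← sum_add_distrib,
    ← sum_range_choose]
  simp only [choose_zero_right, mul_one]
  rw [← sum_range_two_mul (fun i => k.choose i)]
  refine (sum_subset (range_subset_range.2 (by omega)) fun i _ hi => ?_).symm
  exact choose_eq_zero_of_lt (by simpa using hi)

theorem oddChooseSum_two_mul_add (t r : ℕ) :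
    oddChooseSum (2 * t + 1 + r) t = 2 ^ r * (t + r).choose t := by
  induction t generalizing r with
  | zero => simpa [add_comm 1 r] using oddChooseSum_succ_zero r
  | succ t iht =>
    induction r with
    | zero =>
      rw [show 2 * (t + 1) + 1 + 0 = 2 * t + 1 + 2 by ring, oddChooseSum_add_two_succ,
        oddChooseSum_eq_zero (by omega)]
      simpa using iht 0
    | succ r ihr =>
      rw [show 2 * (t + 1) + 1 + (r + 1) = 2 * t + 1 + (r + 1) + 2 by ring,
        oddChooseSum_add_two_succ, show 2 * t + 1 + (r + 1) + 1 = 2 * (t + 1) + 1 + r by ring,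
        ihr, iht, show t + 1 + (r + 1) = t + (r + 1) + 1 by ring, choose_succ_succ',
        show t + 1 + r = t + (r + 1) by ring]
      ring

theorem oddChoosePowSum_eq (k m : ℕ) :
    oddChoosePowSum k m = ∑ m' ∈ range (m + 1), ∑ t ∈ range (m' + 1),
      2 ^ m' * m.choose m' * (stirling2 m' t * t ! * oddChooseSum k t) := by
  calc oddChoosePowSum k m
      = ∑ j ∈ range (k + 1), ∑ m' ∈ range (m + 1), ∑ t ∈ range (m' + 1),
          2 ^ m' * m.choose m' * (stirling2 m' t * t ! * (k.choose (2 * j + 1) * j.choose t)) := by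
        refine sum_congr rfl fun j _ => ?_
        simp only [add_pow, one_pow, mul_one, Nat.cast_id, mul_sum]
        refine sum_congr rfl fun m' _ => ?_
        simp only [mul_pow, pow_eq_sum_stirling2_mul_choose m' j, mul_sum, sum_mul]
        exact sum_congr rfl fun t _ => by ring
    _ = _ := by
        rw [sum_comm]
        refine sum_congr rfl fun m' _ => ?_
        rw [sum_comm]
        simp only [oddChooseSum, mul_sum]

theorem padicValNat_factorial_add_s2 (k : ℕ) : padicValNat 2 k ! + s2 k = k := by
  have h := sub_one_mul_padicValNat_factorial (p := 2) k
  have := digit_sum_le 2 k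
  simp only [s2]
  omega

theorem padicValNat_choose_add_s2 {j m : ℕ} (h : j ≤ m) :
    padicValNat 2 (m.choose j) + s2 m = s2 j + s2 (m - j) := by
  have hv := congrArg (padicValNat 2) (choose_mul_factorial_mul_factorial h)
  have hC := (choose_pos h).ne'
  rw [padicValNat.mul (mul_ne_zero hC (factorial_ne_zero _)) (factorial_ne_zero _),
    padicValNat.mul hC (factorial_ne_zero _)] at hv
  have := padicValNat_factorial_add_s2 j
  have := padicValNat_factorial_add_s2 (m - j)
  have := padicValNat_factorial_add_s2 m
  omega

theorem s2_zero : s2 0 = 0 := by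
  simp [s2]

theorem s2_one : s2 1 = 1 := by
  simp [s2]

theorem s2_pos {k : ℕ} (hk : k ≠ 0) : 0 < s2 k := by
  have := padicValNat_factorial_lt_of_ne_zero 2 hk
  have := padicValNat_factorial_add_s2 k
  omega

theorem s2_add_two_pow_mul {y c : ℕ} (hy : y < 2 ^ c) (z : ℕ) :
    s2 (y + 2 ^ c * z) = s2 y + s2 z := by
  rcases eq_or_ne z 0 with rfl | hz
  · simp [s2_zero]
  have hlen : (digits 2 y).length ≤ c := (digits_length_le_iff (by norm_num) y).2 hy
  rw [s2, ← Nat.add_sub_cancel' hlen,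
    ← digits_append_zeroes_append_digits (by norm_num) (pos_of_ne_zero hz)]
  simp [s2]

theorem s2_two_pow (n : ℕ) : s2 (2 ^ n) = 1 := by
  simpa [s2_zero, s2_one] using s2_add_two_pow_mul (Nat.two_pow_pos n) 1

theorem two_pow_s2_dvd_of_two_pow_dvd_factorial_mul {k a : ℕ} (h : 2 ^ k ∣ k ! * a) :
    2 ^ s2 k ∣ a := by
  rcases eq_or_ne a 0 with rfl | ha
  · exact dvd_zero _
  rw [padicValNat_dvd_iff_le ha]
  rw [padicValNat_dvd_iff_le (mul_ne_zero (factorial_ne_zero k) ha),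
    padicValNat.mul (factorial_ne_zero k) ha] at h
  have := padicValNat_factorial_add_s2 k
  omega

theorem add_two_le_add_s2_two_pow_sub {n m' t : ℕ} (hm' : m' ≤ 2 ^ n) (ht : t ≠ 0)
    (htm' : t ≤ m') (h2t : 2 * t < 2 ^ n) : t + 2 ≤ m' + s2 (2 ^ n - m') := by
  rcases eq_or_lt_of_le hm' with rfl | hm'n
  · omega
  rcases eq_or_lt_of_le htm' with rfl | htm'
  · -- `2^n - t` lies strictly between `2^(n-1)` and `2^n`, so it has two binary digits `1`.
    obtain ⟨c, rfl⟩ := exists_eq_succ_of_ne_zero (show n ≠ 0 by rintro rfl; simp at h2t; omega)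
    rw [pow_succ] at h2t ⊢
    rw [show 2 ^ c * 2 - t = (2 ^ c - t) + 2 ^ c * 1 by omega, s2_add_two_pow_mul (by omega),
      s2_one]
    have := s2_pos (show 2 ^ c - t ≠ 0 by omega)
    omega
  · have := s2_pos (show 2 ^ n - m' ≠ 0 by omega)
    omega

theorem two_pow_dvd_oddChoosePowSum_term {m m' t r : ℕ} (hm' : m' ≤ m)
    (hS : 2 ^ s2 t ∣ 2 ^ s2 m' * stirling2 m' t) :
    2 ^ (m' + s2 (m - m') + t + r) ∣
      2 ^ s2 m * (2 ^ m' * m.choose m' *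
        (stirling2 m' t * t ! * oddChooseSum (2 * t + 1 + r) t)) := by
  rcases eq_or_ne (stirling2 m' t) 0 with h0 | h0
  · simp [h0]
  have hC : m.choose m' ≠ 0 := (choose_pos hm').ne'
  have hC' : (t + r).choose t ≠ 0 := (choose_pos (by omega)).ne'
  rw [padicValNat_dvd_iff_le (by positivity)] at hS
  rw [oddChooseSum_two_mul_add, padicValNat_dvd_iff_le (by positivity)]
  simp only [padicValNat.mul, padicValNat.prime_pow, h0, hC, hC', factorial_ne_zero, ne_eq,
    pow_eq_zero_iff', OfNat.ofNat_ne_zero, false_and, not_false_eq_true, mul_eq_zero,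
    or_self] at hS ⊢
  have := padicValNat_choose_add_s2 hm'
  have := padicValNat_factorial_add_s2 t
  omega

theorem oddChoosePowSum_succ (K m : ℕ) :
    oddChoosePowSum (K + 1) m = 2 ^ K + ∑ a ∈ range m, ∑ t ∈ range (a + 2),
      2 ^ (a + 1) * m.choose (a + 1) * (stirling2 (a + 1) t * t ! * oddChooseSum (K + 1) t) := by
  rw [oddChoosePowSum_eq, sum_range_succ', add_comm]
  simp [stirling2, oddChooseSum_succ_zero]

/-- `hterm` is what `two_pow_dvd_oddChoosePowSum_term` needs to make every term of
`oddChoosePowSum_succ` except `2^K` divisible by `2^(K+1+ex)`. -/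
theorem two_pow_dvd_two_pow_s2_mul_stirling2_add {m K ex : ℕ} (hKm : K + 1 ≤ m)
    (hex : ex ≤ s2 m)
    (hterm : ∀ m' t, 1 ≤ m' → m' ≤ m → 1 ≤ t → t ≤ m' → 2 * t < K + 1 →
      2 ^ s2 t ∣ 2 ^ s2 m' * stirling2 m' t ∧ t + 1 + ex ≤ m' + s2 (m - m')) :
    (2 : ℤ) ^ (K + 1 + ex) ∣
      2 ^ s2 m * ((-1) ^ (K + 1) * (K + 1)! * stirling2 m (K + 1) + 2 ^ K) := by
  have hE : 2 ^ (K + 1 + ex) ∣ 2 ^ s2 m * evenChoosePowSum (K + 1) m := by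
    rw [pow_add, mul_comm (2 ^ s2 m)]
    exact mul_dvd_mul (two_pow_dvd_evenChoosePowSum (by omega) hKm) (pow_dvd_pow 2 hex)
  have hR : 2 ^ (K + 1 + ex) ∣ 2 ^ s2 m * ∑ a ∈ range m, ∑ t ∈ range (a + 2),
      2 ^ (a + 1) * m.choose (a + 1) * (stirling2 (a + 1) t * t ! * oddChooseSum (K + 1) t) := by
    simp only [mul_sum]
    refine dvd_sum fun a ha => dvd_sum fun t ht => ?_
    rw [mem_range] at ha ht
    rcases eq_or_ne t 0 with rfl | ht0
    · simp [stirling2]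
    rcases le_or_gt (K + 1) (2 * t) with hKt | hKt
    · simp [oddChooseSum_eq_zero hKt]
    obtain ⟨hS, hex'⟩ := hterm (a + 1) t (by omega) (by omega) (by omega) (by omega) hKt
    obtain ⟨r, hr⟩ : ∃ r, K + 1 = 2 * t + 1 + r := ⟨K - 2 * t, by omega⟩
    rw [hr]
    exact (pow_dvd_pow 2 (by omega)).trans (two_pow_dvd_oddChoosePowSum_term (by omega) hS)
  rw [← evenChoosePowSum_sub_oddChoosePowSum, oddChoosePowSum_succ]
  rw [Nat.cast_add, Nat.cast_pow, Nat.cast_ofNat,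
    show ∀ x e r y : ℤ, x * (e - (y + r) + y) = x * e - x * r by intros; ring]
  exact dvd_sub (mod_cast hE) (mod_cast hR)

theorem two_pow_s2_dvd_two_pow_s2_mul_stirling2 (m k : ℕ) :
    2 ^ s2 k ∣ 2 ^ s2 m * stirling2 m k := by
  induction m using Nat.strong_induction_on generalizing k with
  | _ m ihm =>
  induction k using Nat.strong_induction_on with
  | _ k ihk =>
  rcases lt_or_ge m k with hmk | hkm
  · simp [stirling2_eq_zero_of_lt hmk]
  rcases k with _ | K
  · simp [s2_zero]
  have hm : s2 m ≠ 0 := (s2_pos (by omega)).ne'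
  have hdvd := two_pow_dvd_two_pow_s2_mul_stirling2_add (ex := 0) hkm (zero_le _)
    fun m' t _ hm' _ htm' h2t => by
      rcases eq_or_lt_of_le hm' with rfl | hm'
      · exact ⟨ihk t (by omega), by omega⟩
      · exact ⟨ihm m' hm' t, by have := s2_pos (show m - m' ≠ 0 by omega); omega⟩
  have hK : (2 : ℤ) ^ (K + 1) ∣ 2 ^ s2 m * 2 ^ K := by
    rw [← pow_add]; exact pow_dvd_pow 2 (by omega)
  have hsign : (2 : ℤ) ^ s2 m * ((-1) ^ (K + 1) * (K + 1)! * stirling2 m (K + 1)) =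
      (-1) ^ (K + 1) * ((2 ^ s2 m * ((K + 1)! * stirling2 m (K + 1)) : ℕ) : ℤ) := by
    push_cast; ring
  rw [add_zero, mul_add, dvd_add_left hK, hsign, (isUnit_neg_one.pow _).dvd_mul_left] at hdvd
  refine two_pow_s2_dvd_of_two_pow_dvd_factorial_mul ?_
  rw [mul_left_comm]
  exact_mod_cast hdvd

theorem padicValInt_two_eq_of_dvd_add_two_pow {x : ℤ} {a : ℕ}
    (h : (2 : ℤ) ^ (a + 1) ∣ x + 2 ^ a) : padicValInt 2 x = a := by
  obtain ⟨c, hc⟩ := h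
  have hx : x = ((2 ^ a : ℕ) : ℤ) * (2 * c - 1) := by push_cast; linear_combination hc
  rw [hx, padicValInt.mul (by positivity) (by omega), padicValInt.of_nat, padicValNat.prime_pow,
    padicValInt.eq_zero_of_not_dvd (by omega), add_zero]

theorem stmt_15_general (n k : ℕ) (hk2 : k ≤ 2 ^ n) :
    padicValNat 2 (stirling2 (2 ^ n) k) = s2 k - 1 := by
  rcases k with _ | K
  · obtain ⟨j, hj⟩ := exists_eq_succ_of_ne_zero (Nat.two_pow_pos n).ne'
    simp [hj, stirling2, s2_zero]
  have hdvd := two_pow_dvd_two_pow_s2_mul_stirling2_add (ex := 1) hk2 (s2_two_pow n).ge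
    fun m' t _ hm' ht htm' h2t =>
      ⟨two_pow_s2_dvd_two_pow_s2_mul_stirling2 m' t,
        by have := add_two_le_add_s2_two_pow_sub hm' (by omega) htm' (by omega); omega⟩
  rw [s2_two_pow, pow_one, _root_.pow_succ', mul_dvd_mul_iff_left two_ne_zero] at hdvd
  have hS : stirling2 (2 ^ n) (K + 1) ≠ 0 := by
    rintro h
    simp only [h, Nat.cast_zero, mul_zero, zero_add] at hdvd
    rw [_root_.pow_dvd_pow_iff two_ne_zero (by norm_num [Int.isUnit_iff])] at hdvd
    omega
  have hv := padicValInt_two_eq_of_dvd_add_two_pow hdvd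
  have : padicValNat 2 ((K + 1)! * stirling2 (2 ^ n) (K + 1)) = K := by
    simpa [padicValInt, Int.natAbs_mul, Int.natAbs_pow] using hv
  rw [padicValNat.mul (factorial_ne_zero _) hS] at this
  have := padicValNat_factorial_add_s2 (K + 1)
  omega

theorem stmt_15 (n k : ℕ) (hn : 0 < n) (hk : 1 ≤ k) (hk2 : k ≤ 2 ^ n) :
    padicValNat 2 (stirling2 (2 ^ n) k) = s2 k - 1 :=
  stmt_15_general n k hk2
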